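/- arXiv:2202.01099 — 7 statements merged into one kernel-verified Lean document; each statement's English description precedes it below -/
import Mathlib

section
/- Let g : ℝ²₊ → ℝ²₊ be differentiable at y* > 0 with g(y*) = y*, such that r·y* is a fixed point for all r > 0 and ‖g(y)‖₁ = ‖y‖₁ for all y > 0. Then there exists R ∈ ℝ such that Dg(y*)·(1,-1) = R·(1,-1), and hence the spectrum of Dg(y*) equals {1, R}. -/
/-! Conservation of `y 0 + y 1` on the open positive cone forces `Dg(y*)` to preserve the sum
functional, so `Dg(y*)` maps the line `{v | v 0 + v 1 = 0} = ℝ • (1, -1)` into itself, which makes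
`(1, -1)` an eigenvector. Differentiating `g (r • y*) = r • y*` at `r = 1` makes `y*` an eigenvector
for the eigenvalue `1`. An eigenvector with nonzero sum can only have eigenvalue `1`, and one with
zero sum is a multiple of `(1, -1)`, so these are all the eigenvalues. -/

open Filter Topology

section Derivative

variable {𝕜 E F G : Type*} [NontriviallyNormedField 𝕜]
  [NormedAddCommGroup E] [NormedSpace 𝕜 E] [NormedAddCommGroup F] [NormedSpace 𝕜 F]
  [NormedAddCommGroup G] [NormedSpace 𝕜 G]

theorem HasFDerivAt.clm_comp_eq_of_eventually_eq {g : E → F} {D : E →L[𝕜] F} {x : E}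
    (hg : HasFDerivAt g D x) (L : F →L[𝕜] G) (M : E →L[𝕜] G)
    (h : ∀ᶠ y in 𝓝 x, L (g y) = M y) : L.comp D = M :=
  ((L.hasFDerivAt.comp x hg).congr_of_eventuallyEq (h.mono fun _ hy => hy.symm)).unique
    M.hasFDerivAt

theorem HasFDerivAt.apply_eq_self_of_eventually_fixed_on_ray {g : E → E} {D : E →L[𝕜] E} {x : E}
    (hg : HasFDerivAt g D x) (h : ∀ᶠ r in 𝓝 (1 : 𝕜), g (r • x) = r • x) : D x = x := by
  have hray : HasDerivAt (fun r : 𝕜 => r • x) x 1 := by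
    simpa using (hasDerivAt_id (1 : 𝕜)).smul_const x
  have hg_ray : HasDerivAt (fun r : 𝕜 => g (r • x)) (D x) 1 :=
    (by simpa using hg : HasFDerivAt g D ((1 : 𝕜) • x)).comp_hasDerivAt 1 hray
  exact (hg_ray.congr_of_eventuallyEq (h.mono fun _ hr => hr.symm)).unique hray

end Derivative

section SumPreserving

variable {K : Type*} [Field K]

theorem eq_smul_of_add_eq_zero {v : Fin 2 → K} (hv : v 0 + v 1 = 0) :
    v = v 0 • ![(1 : K), -1] := by
  have hv1 : v 1 = -v 0 := eq_neg_of_add_eq_zero_right hv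
  ext i
  fin_cases i <;> simp [hv1]

variable {D : Module.End K (Fin 2 → K)} (hsum : ∀ v, D v 0 + D v 1 = v 0 + v 1)
include hsum

theorem apply_eq_smul_of_sum_preserving :
    D ![(1 : K), -1] = D ![(1 : K), -1] 0 • ![(1 : K), -1] :=
  eq_smul_of_add_eq_zero (by simp [hsum])

theorem hasEigenvalue_iff_of_sum_preserving {y : Fin 2 → K} (hy : y ≠ 0) (hDy : D y = y)
    (μ : K) : D.HasEigenvalue μ ↔ μ = 1 ∨ μ = D ![(1 : K), -1] 0 := by
  set w : Fin 2 → K := ![1, -1]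
  constructor
  · intro hμ
    obtain ⟨v, hv⟩ := hμ.exists_hasEigenvector
    have hDv : D v = μ • v := hv.apply_eq_smul
    by_cases hc : v 0 + v 1 = 0
    · have hvw : v = v 0 • w := eq_smul_of_add_eq_zero hc
      have hv0 : v 0 ≠ 0 := fun h0 => hv.2 (by rw [hvw, h0, zero_smul])
      right
      have hDv0 : μ * v 0 = D w 0 * v 0 := by
        calc μ * v 0 = D v 0 := by simp [hDv]
          _ = D w 0 * v 0 := by
            rw [hvw, map_smul, apply_eq_smul_of_sum_preserving hsum]
            simp [w, mul_comm]
      exact mul_right_cancel₀ hv0 hDv0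
    · left
      refine mul_right_cancel₀ hc ?_
      simpa [hDv, mul_add] using hsum v
  · have hw : w ≠ 0 := fun h => by simpa [w] using congrFun h 0
    rintro (rfl | rfl)
    · exact Module.End.hasEigenvalue_of_hasEigenvector
        ⟨Module.End.mem_eigenspace_iff.2 (by rw [hDy, one_smul]), hy⟩
    · exact Module.End.hasEigenvalue_of_hasEigenvector
        ⟨Module.End.mem_eigenspace_iff.2 (apply_eq_smul_of_sum_preserving hsum), hw⟩

end SumPreserving

theorem stmt_8_general (g : (Fin 2 → ℝ) → (Fin 2 → ℝ))
    (hcons : ∀ y : Fin 2 → ℝ, (∀ i, 0 < y i) → g y 0 + g y 1 = y 0 + y 1)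
    (ystar : Fin 2 → ℝ) (hpos : ∀ i, 0 < ystar i)
    (D : (Fin 2 → ℝ) →L[ℝ] (Fin 2 → ℝ))
    (hderiv : HasFDerivAt g D ystar)
    (hfix : ∀ r : ℝ, 0 < r → g (r • ystar) = r • ystar) :
    ∃ R : ℝ, D ![(1 : ℝ), -1] = R • ![(1 : ℝ), -1] ∧
      spectrum ℝ D = {1, R} := by
  let s : (Fin 2 → ℝ) →L[ℝ] ℝ := .proj 0 + .proj 1
  have hpos_near : ∀ᶠ y in 𝓝 ystar, ∀ i, 0 < y i :=
    eventually_all.2 fun i => (continuous_apply i).continuousAt.eventually (lt_mem_nhds (hpos i))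
  have hsD : s.comp D = s :=
    hderiv.clm_comp_eq_of_eventually_eq s s (hpos_near.mono fun y hy => hcons y hy)
  have hsum : ∀ v, D v 0 + D v 1 = v 0 + v 1 := fun v => congr($hsD v)
  have hDy : D ystar = ystar :=
    hderiv.apply_eq_self_of_eventually_fixed_on_ray
      ((lt_mem_nhds one_pos).mono fun r hr => hfix r hr)
  have hy : ystar ≠ 0 := fun h => (hpos 0).ne' (by simp [h])
  refine ⟨D ![1, -1] 0, apply_eq_smul_of_sum_preserving (D := (D : Module.End ℝ _)) hsum, ?_⟩
  ext μ
  have hμ := hasEigenvalue_iff_of_sum_preserving (D := (D : Module.End ℝ _)) hsum hy hDy μ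
  rwa [ContinuousLinearMap.spectrum_eq, ← Module.End.hasEigenvalue_iff_mem_spectrum,
    Set.mem_insert_iff, Set.mem_singleton_iff]

theorem stmt_8 (g : (Fin 2 → ℝ) → (Fin 2 → ℝ))
    (hposmap : ∀ y : Fin 2 → ℝ, (∀ i, 0 < y i) → ∀ i, 0 < g y i)
    (hcons : ∀ y : Fin 2 → ℝ, (∀ i, 0 < y i) → g y 0 + g y 1 = y 0 + y 1)
    (ystar : Fin 2 → ℝ) (hpos : ∀ i, 0 < ystar i)
    (hfixstar : g ystar = ystar)
    (D : (Fin 2 → ℝ) →L[ℝ] (Fin 2 → ℝ))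
    (hderiv : HasFDerivAt g D ystar)
    (hfix : ∀ r : ℝ, 0 < r → g (r • ystar) = r • ystar) :
    ∃ R : ℝ, D ![(1 : ℝ), -1] = R • ![(1 : ℝ), -1] ∧
      spectrum ℝ D = {1, R} :=
  stmt_8_general g hcons ystar hpos D hderiv hfix
end

section
/- Let α ≥ 1/2 and define R₁(z) = (2 - 2αz - z²) / (2(1-z)(1-αz)). Then |R₁(z)| < 1 for all z < 0. -/
theorem stmt_10 (α : ℝ) (hα : 1 / 2 ≤ α) :
    ∀ z : ℝ, z < 0 →
      |(2 - 2 * α * z - z ^ 2) / (2 * (1 - z) * (1 - α * z))| < 1 := by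
  intro z hz
  have h1 : 0 < 1 - z := by linarith
  have h2 : 0 < 1 - α * z := by nlinarith
  have hden : 0 < 2 * (1 - z) * (1 - α * z) := by positivity
  rw [abs_lt]
  constructor
  · rw [neg_lt, ← neg_div, div_lt_iff₀ hden]; nlinarith
  · rw [div_lt_iff₀ hden]; nlinarith
end

section
/- Let α ≥ 1 and define R₀(z_a, z_b) = (2 - (z_a + z_b)(z_a/(1-αz_a) + z_b/(1-αz_b))) / (2(1 - (z_a + z_b))). Then |R₀(z_a, z_b)| < 1 for all z_a, z_b < 0. -/
theorem stmt_11 (α : ℝ) (hα : 1 ≤ α) :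
    ∀ za zb : ℝ, za < 0 → zb < 0 →
      |(2 - (za + zb) * (za / (1 - α * za) + zb / (1 - α * zb))) /
        (2 * (1 - (za + zb)))| < 1 := by
  intro za zb hza hzb
  have ha : 0 < 1 - α * za := by nlinarith
  have hb : 0 < 1 - α * zb := by nlinarith
  have hqa : -1 < za / (1 - α * za) := by
    rw [lt_div_iff₀ ha]; nlinarith
  have hqb : -1 < zb / (1 - α * zb) := by
    rw [lt_div_iff₀ hb]; nlinarith
  have hqa0 : za / (1 - α * za) < 0 := div_neg_of_neg_of_pos hza ha
  have hqb0 : zb / (1 - α * zb) < 0 := div_neg_of_neg_of_pos hzb hb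
  have hD : 0 < 2 * (1 - (za + zb)) := by nlinarith
  rw [abs_div, abs_of_pos hD, div_lt_one hD, abs_lt]
  have hs : za + zb < 0 := by linarith
  constructor
  · nlinarith [mul_pos (by linarith : (0:ℝ) < -(za + zb))
      (by linarith : (0:ℝ) < za / (1 - α * za) + zb / (1 - α * zb) + 2)]
  · nlinarith [mul_pos (by linarith : (0:ℝ) < -(za + zb))
      (by linarith : (0:ℝ) < -(za / (1 - α * za) + zb / (1 - α * zb)))]
end

section
/- Let α ≥ 1/2 and R₀(z_a, z_b) = (2 - (z_a+z_b)(z_a/(1-αz_a) + z_b/(1-αz_b))) / (2(1 - (z_a+z_b))). For fixed z_b < 0, the map z_a ↦ R₀(z_a, z_b) is strictly increasing on (-∞, 0). -/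
/-!
Put `s = z_a + z_b < 0` and `h = 1 / (1 - s) ∈ (0, 1]`. Then
`R₀ = h + (1 - h) q` with `q = (z_a / (1 - α z_a) + z_b / (1 - α z_b)) / 2 < 0`,
a convex combination of `1` and `q` with weight `h`. As `z_a` grows, both `h` and `q` grow,
and `q < 1`, so the combination grows.
-/

open Set

theorem StrictMonoOn.add_one_sub_mul {ι R : Type*} [Preorder ι] [CommRing R] [LinearOrder R]
    [IsStrictOrderedRing R] {s : Set ι} {h q : ι → R} (hh : StrictMonoOn h s)
    (hq : MonotoneOn q s) (hh_le : ∀ x ∈ s, h x ≤ 1) (hq_lt : ∀ x ∈ s, q x < 1) :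
    StrictMonoOn (fun x => h x + (1 - h x) * q x) s := by
  intro x hx y hy hxy
  have key : (h y + (1 - h y) * q y) - (h x + (1 - h x) * q x)
      = (h y - h x) * (1 - q x) + (1 - h y) * (q y - q x) := by ring
  have first_pos : 0 < (h y - h x) * (1 - q x) :=
    mul_pos (sub_pos.2 (hh hx hy hxy)) (sub_pos.2 (hq_lt x hx))
  have second_nonneg : 0 ≤ (1 - h y) * (q y - q x) :=
    mul_nonneg (sub_nonneg.2 (hh_le y hy)) (sub_nonneg.2 (hq hx hy hxy.le))
  exact sub_pos.1 (key ▸ add_pos_of_pos_of_nonneg first_pos second_nonneg)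

theorem strictMonoOn_div_one_sub_mul {α : ℝ} (hα : 0 ≤ α) :
    StrictMonoOn (fun z : ℝ => z / (1 - α * z)) (Iio 0) := by
  intro x hx y hy hxy
  have hx' : 0 < 1 - α * x := by nlinarith [mem_Iio.1 hx]
  have hy' : 0 < 1 - α * y := by nlinarith [mem_Iio.1 hy]
  rw [div_lt_div_iff₀ hx' hy']
  linarith

theorem stmt_12 (α : ℝ) (hα : 1 / 2 ≤ α) (zb : ℝ) (hzb : zb < 0) :
    StrictMonoOn (fun za : ℝ =>
      (2 - (za + zb) * (za / (1 - α * za) + zb / (1 - α * zb))) /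
        (2 * (1 - (za + zb)))) (Set.Iio 0) := by
  have hα0 : 0 ≤ α := by linarith
  have hc : zb / (1 - α * zb) < 0 := div_neg_of_neg_of_pos hzb (by nlinarith)
  have hh : StrictMonoOn (fun z => (1 - (z + zb))⁻¹) (Iio 0) := fun x hx y hy hxy =>
    inv_strictAntiOn (mem_Ioi.2 (by linarith [mem_Iio.1 hy]))
      (mem_Ioi.2 (by linarith [mem_Iio.1 hx])) (by linarith)
  have hq : MonotoneOn (fun z => (z / (1 - α * z) + zb / (1 - α * zb)) / 2) (Iio 0) :=
    fun x hx y hy hxy => by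
      have := (strictMonoOn_div_one_sub_mul hα0).monotoneOn hx hy hxy
      dsimp only at this ⊢
      linarith
  have hq_lt : ∀ z ∈ Iio (0 : ℝ), (z / (1 - α * z) + zb / (1 - α * zb)) / 2 < 1 :=
    fun z hz => by
      have : z / (1 - α * z) < 0 := div_neg_of_neg_of_pos hz (by nlinarith [mem_Iio.1 hz])
      linarith
  refine (hh.add_one_sub_mul hq (fun z hz => inv_le_one_of_one_le₀ ?_) hq_lt).congr ?_
  · linarith [mem_Iio.1 hz]
  · intro z hz
    have : 1 - (z + zb) ≠ 0 := by linarith [mem_Iio.1 hz]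
    field_simp
    ring
end

section
/- Let α ≥ 1/2 and R₀ as above. Then R₀(z_a, z_b) < 1 for all z_a, z_b < 0, and R₀(z_a, z_b) → 1 as (z_a, z_b) → (0,0) along negative values. -/
theorem stmt_13 (α : ℝ) (hα : 1 / 2 ≤ α) :
    (∀ za zb : ℝ, za < 0 → zb < 0 →
      (2 - (za + zb) * (za / (1 - α * za) + zb / (1 - α * zb))) /
        (2 * (1 - (za + zb))) < 1) ∧
    Filter.Tendsto (fun p : ℝ × ℝ =>
        (2 - (p.1 + p.2) * (p.1 / (1 - α * p.1) + p.2 / (1 - α * p.2))) /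
          (2 * (1 - (p.1 + p.2))))
      (nhdsWithin (0, 0) (Set.Iio 0 ×ˢ Set.Iio 0)) (nhds 1) := by
  constructor
  · intro za zb hza hzb
    have ha : (0:ℝ) < 1 - α * za := by nlinarith
    have hb : (0:ℝ) < 1 - α * zb := by nlinarith
    have hTa : za / (1 - α * za) < 0 := div_neg_of_neg_of_pos hza ha
    have hTb : zb / (1 - α * zb) < 0 := div_neg_of_neg_of_pos hzb hb
    have hs : za + zb < 0 := by linarith
    have hT : za / (1 - α * za) + zb / (1 - α * zb) < 0 := by linarith
    rw [div_lt_one (by nlinarith : (0:ℝ) < 2 * (1 - (za + zb)))]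
    nlinarith [mul_pos_of_neg_of_neg hs hT]
  · have hc : ContinuousAt (fun p : ℝ × ℝ =>
        (2 - (p.1 + p.2) * (p.1 / (1 - α * p.1) + p.2 / (1 - α * p.2))) /
          (2 * (1 - (p.1 + p.2)))) (0, 0) := by
      apply ContinuousAt.div
      · apply ContinuousAt.sub continuousAt_const
        apply ContinuousAt.mul (by fun_prop)
        apply ContinuousAt.add
        · exact ContinuousAt.div (by fun_prop) (by fun_prop) (by norm_num)
        · exact ContinuousAt.div (by fun_prop) (by fun_prop) (by norm_num)
      · fun_prop
      · norm_num
    have := hc.continuousWithinAt (s := Set.Iio 0 ×ˢ Set.Iio 0)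
    unfold ContinuousWithinAt at this
    norm_num at this
    exact this
end

section
/- Let α ≥ 1/2 and R₀ as above. Then R₀(z_a, z_b) > -1/α for all z_a, z_b < 0. -/
/-! Since `t / (1 - t) > -1` for `t < 1`, each of `α z_a / (1 - α z_a)` and `α z_b / (1 - α z_b)`
exceeds `-1`. Multiplying by `-s > 0`, where `s = z_a + z_b`, the numerator of `α R₀` exceeds
`2α + 2s > 2s - 2`, which is `-1` times its (positive) denominator. -/

lemma neg_one_lt_div_one_sub {t : ℝ} (ht : t < 1) : -1 < t / (1 - t) := by
  rw [lt_div_iff₀ (sub_pos.mpr ht)]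
  linarith

lemma neg_one_lt_mul_div_one_sub_mul {α z : ℝ} (hz : α * z < 1) :
    -1 < α * (z / (1 - α * z)) := by
  rw [← mul_div_assoc]
  exact neg_one_lt_div_one_sub hz

theorem stmt_15 (α : ℝ) (hα : 1 / 2 ≤ α) :
    ∀ za zb : ℝ, za < 0 → zb < 0 →
      -1 / α <
        (2 - (za + zb) * (za / (1 - α * za) + zb / (1 - α * zb))) /
          (2 * (1 - (za + zb))) := by
  intro za zb ha hb
  have hα0 : 0 < α := by linarith
  have hsum : -2 < α * (za / (1 - α * za) + zb / (1 - α * zb)) := by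
    have hta : -1 < α * (za / (1 - α * za)) :=
      neg_one_lt_mul_div_one_sub_mul ((mul_neg_of_pos_of_neg hα0 ha).trans one_pos)
    have htb : -1 < α * (zb / (1 - α * zb)) :=
      neg_one_lt_mul_div_one_sub_mul ((mul_neg_of_pos_of_neg hα0 hb).trans one_pos)
    linarith [mul_add α (za / (1 - α * za)) (zb / (1 - α * zb))]
  rw [div_lt_div_iff₀ hα0 (by linarith)]
  linarith [mul_pos (neg_pos.mpr (add_neg ha hb)) (neg_lt_iff_pos_add.mp hsum)]
end

section
/- Let α ≥ 1/2 and z < 0, and define R(z) = (1-αz)^{1-1/α} / ((1-αz)^{1-1/α} - z(1 - (α - 1/2)z)). Then 0 < R(z) < 1. -/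
theorem stmt_16 (α : ℝ) (hα : 1 / 2 ≤ α) (z : ℝ) (hz : z < 0) :
    0 < (1 - α * z) ^ (1 - 1 / α) /
        ((1 - α * z) ^ (1 - 1 / α) - z * (1 - (α - 1 / 2) * z)) ∧
      (1 - α * z) ^ (1 - 1 / α) /
        ((1 - α * z) ^ (1 - 1 / α) - z * (1 - (α - 1 / 2) * z)) < 1 := by
  have hb : (0:ℝ) < 1 - α * z := by nlinarith
  have hN : (0:ℝ) < (1 - α * z) ^ (1 - 1 / α) := Real.rpow_pos_of_pos hb _
  have hq : (0:ℝ) < -(z * (1 - (α - 1 / 2) * z)) := by nlinarith [mul_nonneg (show (0:ℝ) ≤ α - 1 / 2 by linarith) (sq_nonneg z)]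
  have hD : (1 - α * z) ^ (1 - 1 / α) <
      (1 - α * z) ^ (1 - 1 / α) - z * (1 - (α - 1 / 2) * z) := by linarith
  constructor
  · exact div_pos hN (lt_trans hN hD)
  · exact (div_lt_one (lt_trans hN hD)).mpr hD
end
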